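/- (Key strict inequality for Theorem 3.11.) Let Φ be any branching mechanism with Lévy measure π, and let 0 < r < r' < ∞ be such that π((r,r')) > 0. For a branching mechanism Ψ and λ ≥ 0, let u^Ψ_t(λ) denote the unique locally bounded nonnegative solution of u_t = λt − ∫₀ᵗ Ψ(u_s) ds. Then for every t > 0, u^{Φ^{(r,∞)}}_t(π((r,∞))) > u^{Φ^{[r',∞)}}_t(π([r',∞))). -/

import Mathlib

open MeasureTheory Filter Set

/-- The branching mechanism `Φ(λ) = αλ + βλ² + ∫_{(0,∞)} (e^{-λθ} - 1 + λθ) π(dθ)`. -/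
noncomputable def Phi (α β : ℝ) (π : Measure ℝ) (lam : ℝ) : ℝ :=
  α * lam + β * lam ^ 2 + ∫ θ, (Real.exp (-lam * θ) - 1 + lam * θ) ∂π

/-- The `(r,∞)`-truncated branching mechanism
`Φ^{(r,∞)}(λ) = Φ(λ) + ∫_{(r,∞)} (1 - e^{-λθ}) π(dθ)`. -/
noncomputable def PhiIoi (α β : ℝ) (π : Measure ℝ) (r lam : ℝ) : ℝ :=
  Phi α β π lam + ∫ θ in Set.Ioi r, (1 - Real.exp (-lam * θ)) ∂π

/-- The `[r,∞)`-truncated branching mechanism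
`Φ^{[r,∞)}(λ) = Φ(λ) + ∫_{[r,∞)} (1 - e^{-λθ}) π(dθ)`. -/
noncomputable def PhiIci (α β : ℝ) (π : Measure ℝ) (r lam : ℝ) : ℝ :=
  Phi α β π lam + ∫ θ in Set.Ici r, (1 - Real.exp (-lam * θ)) ∂π

/-- `u` is a locally bounded nonnegative solution of `u_t = λt - ∫₀ᵗ Φ(u_s) ds`. -/
def IsMassSolution (Φ : ℝ → ℝ) (lam : ℝ) (u : ℝ → ℝ) : Prop :=
  (∀ t, 0 ≤ t → 0 ≤ u t) ∧
  (∀ T, 0 < T → BddAbove (u '' Set.Icc 0 T)) ∧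
  (∀ t, 0 ≤ t → u t = lam * t - ∫ s in (0:ℝ)..t, Φ (u s))

/-!
With `F₁(v) = π((r,∞)) - Φ^{(r,∞)}(v)` and `F₂(v) = π([r',∞)) - Φ^{[r',∞)}(v)`, the two solutions
satisfy `u₁' = F₁(u₁)`, `u₂' = F₂(u₂)`, `u₁(0) = u₂(0) = 0`, and
`F₁(v) - F₂(v) = ∫_{(r,r')} e^{-vθ} π(dθ) > 0` for every `v ≥ 0`. Comparison then needs no
Lipschitz bound: at a first time where `u₂` catches up with `u₁`, the difference `u₁ - u₂` would
have to be nonincreasing from the left while its derivative `F₁(v) - F₂(v)` is positive.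
-/

theorem image_lt_of_deriv_lt_deriv_boundary_Ici {u v u' v' : ℝ → ℝ} {a : ℝ}
    (hu : ∀ x ∈ Ici a, HasDerivWithinAt u (u' x) (Ici a) x)
    (hv : ∀ x ∈ Ici a, HasDerivWithinAt v (v' x) (Ici a) x) (ha : v a ≤ u a)
    (bound : ∀ x ∈ Ici a, v x = u x → v' x < u' x) {t : ℝ} (ht : a < t) : v t < u t := by
  have hle : ∀ x ∈ Icc a t, v x ≤ u x :=
    image_le_of_deriv_right_lt_deriv_boundary'
      (fun x hx => (hv x hx.1).continuousWithinAt.mono Icc_subset_Ici_self)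
      (fun x hx => (hv x hx.1).mono (Ici_subset_Ici.mpr hx.1)) ha
      (fun x hx => (hu x hx.1).continuousWithinAt.mono Icc_subset_Ici_self)
      (fun x hx => (hu x hx.1).mono (Ici_subset_Ici.mpr hx.1)) (fun x hx => bound x hx.1)
  refine (hle t ⟨ht.le, le_rfl⟩).lt_of_ne fun heq => ?_
  -- `u - v ≥ 0` on `[a, t]` vanishes at `t`, so its derivative there cannot be positive.
  have hmin : IsMinOn (u - v) (Icc a t) t := fun x hx => by
    simpa [heq] using hle x hx
  have hcone : a - t ∈ posTangentConeAt (Icc a t) t :=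
    sub_mem_posTangentConeAt_of_segment_subset (by rw [segment_symm, segment_eq_Icc ht.le])
  have hnonneg := hmin.localize.hasFDerivWithinAt_nonneg
    (((hu t ht.le).sub (hv t ht.le)).mono Icc_subset_Ici_self) hcone
  rw [ContinuousLinearMap.toSpanSingleton_apply, smul_eq_mul] at hnonneg
  nlinarith [bound t ht.le heq]

theorem continuousOn_primitive_Ico {g : ℝ → ℝ} {a T : ℝ}
    (hg : ∀ b ∈ Ico a T, IntervalIntegrable g volume a b) :
    ContinuousOn (fun x => ∫ τ in a..x, g τ) (Ico a T) := by
  intro s hs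
  have hsb : s < (s + T) / 2 := by linarith [hs.2]
  have hab : a ≤ (s + T) / 2 := hs.1.trans hsb.le
  have hcont := intervalIntegral.continuousOn_primitive_interval'
    (hg _ ⟨hab, by linarith [hs.2]⟩) left_mem_uIcc
  rw [uIcc_of_le hab] at hcont
  refine (hcont s ⟨hs.1, hsb.le⟩).mono_of_mem_nhdsWithin
    (mem_nhdsWithin.mpr ⟨Iio ((s + T) / 2), isOpen_Iio, hsb, ?_⟩)
  rintro x ⟨hx, hxa, -⟩
  exact ⟨hxa, le_of_lt hx⟩

theorem hasDerivWithinAt_primitive_Ici {g : ℝ → ℝ} {a : ℝ} (hg : ContinuousOn g (Ici a)) :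
    ∀ s ∈ Ici a, HasDerivWithinAt (fun x => ∫ τ in a..x, g τ) (g s) (Ici a) s := by
  intro s (hs : a ≤ s)
  have hint : IntervalIntegrable g volume a s :=
    (hg.mono (by rw [uIcc_of_le hs]; exact Icc_subset_Ici_self)).intervalIntegrable
  have hmeas := hg.aestronglyMeasurable (μ := volume) measurableSet_Ici
  rcases hs.eq_or_lt with rfl | has
  · exact intervalIntegral.integral_hasDerivWithinAt_right (t := Ioi a) hint
      ⟨Ici a, nhdsWithin_mono _ Ioi_subset_Ici_self self_mem_nhdsWithin, hmeas⟩
      ((hg a self_mem_Ici).mono Ioi_subset_Ici_self)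
  · exact (intervalIntegral.integral_hasDerivAt_right hint ⟨Ici a, Ici_mem_nhds has, hmeas⟩
      (hg.continuousAt (Ici_mem_nhds has))).hasDerivWithinAt

namespace IsMassSolution

variable {Φ : ℝ → ℝ} {lam : ℝ} {u : ℝ → ℝ}

theorem apply_zero (hu : IsMassSolution Φ lam u) : u 0 = 0 := by
  rw [hu.2.2 0 le_rfl, intervalIntegral.integral_same, mul_zero, sub_zero]

theorem continuousOn_Ico (hu : IsMassSolution Φ lam u) {T : ℝ}
    (hint : ∀ b ∈ Ico 0 T, IntervalIntegrable (fun s => Φ (u s)) volume 0 b) :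
    ContinuousOn u (Ico 0 T) :=
  ((continuous_const.mul continuous_id).continuousOn.sub (continuousOn_primitive_Ico hint)).congr
    fun x hx => hu.2.2 x hx.1

theorem exists_bound (hΦ : ContinuousOn Φ (Ici 0)) (hu : IsMassSolution Φ lam u) {T : ℝ}
    (hT : 0 < T) : ∃ C, ∀ s ∈ Icc 0 T, ‖Φ (u s)‖ ≤ C := by
  obtain ⟨M, hM⟩ := hu.2.1 T hT
  obtain ⟨C, hC⟩ := isCompact_Icc.exists_bound_of_continuousOn
    (hΦ.mono (Icc_subset_Ici_self : Icc 0 M ⊆ Ici 0))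
  exact ⟨C, fun s hs => hC _ ⟨hu.1 s hs.1, hM ⟨s, hs, rfl⟩⟩⟩

/-- The integral in the equation is `0` wherever `Φ ∘ u` fails to be integrable, so this has to be
ruled out: past the first such time `u` is linear, hence `Φ ∘ u` is piecewise continuous and
bounded, hence integrable after all. -/
theorem intervalIntegrable (hΦ : ContinuousOn Φ (Ici 0)) (hu : IsMassSolution Φ lam u) {t : ℝ}
    (ht : 0 ≤ t) : IntervalIntegrable (fun s => Φ (u s)) volume 0 t := by
  set g := fun s => Φ (u s)
  by_contra hnt
  set N := {t | 0 ≤ t ∧ ¬IntervalIntegrable g volume 0 t}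
  have hNbdd : BddBelow N := ⟨0, fun x hx => hx.1⟩
  set T := sInf N
  have hT : 0 ≤ T := le_csInf ⟨t, ht, hnt⟩ fun x hx => hx.1
  have hbelow : ∀ b ∈ Ico 0 T, IntervalIntegrable g volume 0 b := fun b hb => by
    by_contra h
    exact (csInf_le hNbdd ⟨hb.1, h⟩).not_gt hb.2
  have habove : ∀ b, T < b → ¬IntervalIntegrable g volume 0 b := fun b hb h => by
    obtain ⟨n, ⟨hn0, hn⟩, hnb⟩ := exists_lt_of_csInf_lt (s := N) ⟨t, ht, hnt⟩ hb
    refine hn (h.mono_set ?_)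
    rw [uIcc_of_le hn0, uIcc_of_le (hn0.trans hnb.le)]
    exact Icc_subset_Icc_right hnb.le
  have hlin : EqOn u (fun s => lam * s) (Ioi T) := fun s hs => by
    rw [hu.2.2 s (hT.trans hs.le), intervalIntegral.integral_undef (habove s hs), sub_zero]
  have hmeas : AEStronglyMeasurable g (volume.restrict (Ico 0 T ∪ Ioi T)) :=
    aestronglyMeasurable_union_iff.mpr
      ⟨(hΦ.comp (hu.continuousOn_Ico hbelow) fun x hx => hu.1 x hx.1).aestronglyMeasurable
          measurableSet_Ico,
        (hΦ.comp ((continuous_const.mul continuous_id).continuousOn.congr hlin)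
          fun x hx => hu.1 x (hT.trans (le_of_lt hx))).aestronglyMeasurable measurableSet_Ioi⟩
  have hae : Ioc 0 (T + 1) ≤ᵐ[volume] (Ico 0 T ∪ Ioi T : Set ℝ) := by
    filter_upwards [Measure.ae_ne volume T] with x hxT hx
    rcases lt_or_gt_of_ne hxT with h | h
    exacts [Or.inl ⟨le_of_lt hx.1, h⟩, Or.inr h]
  obtain ⟨C, hC⟩ := hu.exists_bound hΦ (by linarith : 0 < T + 1)
  refine habove (T + 1) (by linarith) <|
    (intervalIntegrable_iff_integrableOn_Ioc_of_le (by linarith)).mpr <|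
      IntegrableOn.of_bound measure_Ioc_lt_top
        (hmeas.mono_measure (Measure.restrict_mono_ae hae)) C ?_
  filter_upwards [ae_restrict_mem measurableSet_Ioc] with x hx
  exact hC x (Ioc_subset_Icc_self hx)

theorem continuousOn (hΦ : ContinuousOn Φ (Ici 0)) (hu : IsMassSolution Φ lam u) :
    ContinuousOn u (Ici 0) := fun s hs =>
  (hu.continuousOn_Ico (T := s + 1) (fun b hb => hu.intervalIntegrable hΦ hb.1) s
    ⟨hs, by linarith⟩).mono_of_mem_nhdsWithin
      (by rw [← Ici_inter_Iio]; exact inter_mem_nhdsWithin _ (Iio_mem_nhds (by linarith)))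

theorem hasDerivWithinAt (hΦ : ContinuousOn Φ (Ici 0)) (hu : IsMassSolution Φ lam u) :
    ∀ s ∈ Ici 0, HasDerivWithinAt u (lam - Φ (u s)) (Ici 0) s := by
  intro s hs
  have hg : ContinuousOn (fun s => Φ (u s)) (Ici 0) :=
    hΦ.comp (hu.continuousOn hΦ) fun x hx => hu.1 x hx
  simpa using (((hasDerivWithinAt_id s _).const_mul lam).sub
    (hasDerivWithinAt_primitive_Ici hg s hs)).congr
    (fun x hx => hu.2.2 x hx) (hu.2.2 s hs)

end IsMassSolution

theorem Real.exp_neg_sub_one_add_le_min {x : ℝ} (hx : 0 ≤ x) :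
    0 ≤ Real.exp (-x) - 1 + x ∧ Real.exp (-x) - 1 + x ≤ min x (x ^ 2) := by
  have hlow := Real.add_one_le_exp (-x)
  have hle_one : Real.exp (-x) ≤ 1 := Real.exp_le_one_iff.mpr (by linarith)
  have hprod : Real.exp (-x) * (1 + x) ≤ 1 := by
    calc Real.exp (-x) * (1 + x) ≤ Real.exp (-x) * Real.exp x := by
          gcongr; linarith [Real.add_one_le_exp x]
      _ = 1 := by rw [← Real.exp_add, neg_add_cancel, Real.exp_zero]
  exact ⟨by linarith, le_min (by linarith) (by nlinarith [Real.exp_pos (-x)])⟩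

theorem min_mul_sq_le {c θ M : ℝ} (hc : 0 ≤ c) (hθ : 0 ≤ θ) (hcM : c ≤ M) (hM : 1 ≤ M) :
    min (c * θ) ((c * θ) ^ 2) ≤ M ^ 2 * min θ (θ ^ 2) := by
  rw [mul_min_of_nonneg _ _ (by positivity)]
  have hMM : M ≤ M ^ 2 := by nlinarith
  exact min_le_min (by nlinarith [mul_le_mul_of_nonneg_right (hcM.trans hMM) hθ])
    (by rw [mul_pow]; gcongr)

section BranchingMechanism

variable {π : Measure ℝ}

theorem measure_Ioi_lt_top_of_integrable_min_sq
    (hint : Integrable (fun θ => min θ (θ ^ 2)) π) {r : ℝ} (hr : 0 < r) : π (Ioi r) < ⊤ :=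
  (measure_mono fun θ (hθ : r < θ) =>
      min_le_min hθ.le (pow_le_pow_left₀ hr.le hθ.le 2)).trans_lt
    (hint.measure_ge_lt_top (lt_min hr (by positivity)))

theorem continuousOn_Phi (α β : ℝ) (hsupp : π (Iic 0) = 0)
    (hint : Integrable (fun θ => min θ (θ ^ 2)) π) : ContinuousOn (Phi α β π) (Ici 0) := by
  have hpos : ∀ᵐ θ ∂π, 0 < θ := by
    rw [ae_iff]
    simp only [not_lt]
    exact hsupp
  refine (by fun_prop : Continuous fun lam : ℝ => α * lam + β * lam ^ 2).continuousOn.add ?_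
  intro lam₀ (hlam₀ : 0 ≤ lam₀)
  apply continuousWithinAt_of_dominated (bound := fun θ => (lam₀ + 1) ^ 2 * min θ (θ ^ 2))
  · exact Eventually.of_forall fun lam => (by fun_prop : Continuous _).aestronglyMeasurable
  · filter_upwards [self_mem_nhdsWithin,
      eventually_nhdsWithin_of_eventually_nhds (eventually_le_nhds (lt_add_one lam₀))]
      with lam hlam hle
    filter_upwards [hpos] with θ hθ
    have hx : 0 ≤ lam * θ := mul_nonneg hlam hθ.le
    obtain ⟨hnonneg, hbound⟩ := Real.exp_neg_sub_one_add_le_min hx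
    rw [Real.norm_eq_abs, neg_mul, abs_of_nonneg hnonneg]
    exact hbound.trans (min_mul_sq_le hlam hθ.le hle (by linarith))
  · exact hint.const_mul _
  · exact Eventually.of_forall fun θ => (by fun_prop : Continuous _).continuousWithinAt

theorem continuousOn_setIntegral_one_sub_exp {s : Set ℝ} (hs : MeasurableSet s)
    (hs0 : s ⊆ Ici 0) (hfin : π s ≠ ⊤) :
    ContinuousOn (fun lam => ∫ θ in s, (1 - Real.exp (-lam * θ)) ∂π) (Ici 0) := by
  intro lam₀ _
  apply continuousWithinAt_of_dominated (bound := fun _ => (1 : ℝ))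
  · exact Eventually.of_forall fun lam => (by fun_prop : Continuous _).aestronglyMeasurable
  · filter_upwards [self_mem_nhdsWithin] with lam (hlam : 0 ≤ lam)
    filter_upwards [ae_restrict_mem hs] with θ hθ
    have hexp : Real.exp (-lam * θ) ≤ 1 :=
      Real.exp_le_one_iff.mpr (by nlinarith [mem_Ici.mp (hs0 hθ)])
    rw [Real.norm_eq_abs, abs_le]
    constructor <;> linarith [Real.exp_pos (-lam * θ)]
  · exact integrableOn_const hfin
  · exact Eventually.of_forall fun θ => (by fun_prop : Continuous _).continuousWithinAt

theorem integrableOn_exp_neg_mul {s : Set ℝ} (hs : MeasurableSet s) (hs0 : s ⊆ Ici 0)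
    (hfin : π s ≠ ⊤) {v : ℝ} (hv : 0 ≤ v) : IntegrableOn (fun θ => Real.exp (-v * θ)) s π := by
  refine IntegrableOn.of_bound hfin.lt_top
    (by fun_prop : Continuous fun θ => Real.exp (-v * θ)).aestronglyMeasurable 1 ?_
  filter_upwards [ae_restrict_mem hs] with θ hθ
  rw [Real.norm_of_nonneg (Real.exp_pos _).le]
  exact Real.exp_le_one_iff.mpr (by nlinarith [mem_Ici.mp (hs0 hθ)])

theorem toReal_sub_setIntegral_one_sub_exp {s : Set ℝ} (hs : MeasurableSet s)
    (hs0 : s ⊆ Ici 0) (hfin : π s ≠ ⊤) {v : ℝ} (hv : 0 ≤ v) :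
    (π s).toReal - ∫ θ in s, (1 - Real.exp (-v * θ)) ∂π = ∫ θ in s, Real.exp (-v * θ) ∂π := by
  rw [integral_sub (integrableOn_const (C := (1 : ℝ)) hfin)
    (integrableOn_exp_neg_mul hs hs0 hfin hv), setIntegral_const, smul_eq_mul, mul_one,
    measureReal_def, sub_sub_cancel]

theorem sub_PhiIci_lt_sub_PhiIoi (α β : ℝ) (hint : Integrable (fun θ => min θ (θ ^ 2)) π)
    {r r' : ℝ} (hr : 0 < r) (hrr' : r < r') (hππ : 0 < π (Ioo r r')) {v : ℝ} (hv : 0 ≤ v) :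
    (π (Ici r')).toReal - PhiIci α β π r' v < (π (Ioi r)).toReal - PhiIoi α β π r v := by
  have hfin : π (Ioi r) ≠ ⊤ := (measure_Ioi_lt_top_of_integrable_min_sq hint hr).ne
  have hsub : Ioi r ⊆ Ici 0 := Ioi_subset_Ici hr.le
  have hint' := integrableOn_exp_neg_mul measurableSet_Ioi hsub hfin hv
  have hsplit := setIntegral_union ((Iio_disjoint_Ici le_rfl).mono_left Ioo_subset_Iio_self)
    measurableSet_Ici (hint'.mono_set Ioo_subset_Ioi_self)
    (hint'.mono_set (Ici_subset_Ioi.mpr hrr'))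
  rw [Ioo_union_Ici_eq_Ioi hrr'] at hsplit
  have : NeZero (π.restrict (Ioo r r')) := ⟨by
    rw [← Measure.measure_univ_ne_zero, Measure.restrict_apply_univ]; exact hππ.ne'⟩
  have hpos := integral_exp_pos (hint'.mono_set (Ioo_subset_Ioi_self : Ioo r r' ⊆ _))
  have hIci := toReal_sub_setIntegral_one_sub_exp measurableSet_Ici
    (Ici_subset_Ioi.mpr hrr' |>.trans hsub) (ne_top_of_le_ne_top hfin
      (measure_mono (Ici_subset_Ioi.mpr hrr'))) hv
  have hIoi := toReal_sub_setIntegral_one_sub_exp measurableSet_Ioi hsub hfin hv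
  simp only [PhiIci, PhiIoi]
  linarith

end BranchingMechanism

theorem mass_ode_strict_inequality_local_general
    (α β : ℝ) (π : Measure ℝ)
    (hsupp : π (Set.Iic 0) = 0)
    (hint : Integrable (fun θ => min θ (θ ^ 2)) π)
    (r r' : ℝ) (hr : 0 < r) (hrr' : r < r')
    (hππ : 0 < π (Set.Ioo r r'))
    (u₁ u₂ : ℝ → ℝ)
    (hu₁ : IsMassSolution (PhiIoi α β π r) ((π (Set.Ioi r)).toReal) u₁)
    (hu₂ : IsMassSolution (PhiIci α β π r') ((π (Set.Ici r')).toReal) u₂) :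
    ∀ t : ℝ, 0 < t → u₂ t < u₁ t := by
  have hfin : π (Ioi r) ≠ ⊤ := (measure_Ioi_lt_top_of_integrable_min_sq hint hr).ne
  have hΦ₁ : ContinuousOn (PhiIoi α β π r) (Ici 0) :=
    (continuousOn_Phi α β hsupp hint).add (continuousOn_setIntegral_one_sub_exp
      measurableSet_Ioi (Ioi_subset_Ici hr.le) hfin)
  have hΦ₂ : ContinuousOn (PhiIci α β π r') (Ici 0) :=
    (continuousOn_Phi α β hsupp hint).add (continuousOn_setIntegral_one_sub_exp
      measurableSet_Ici (Ici_subset_Ici.mpr (hr.trans hrr').le)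
      (ne_top_of_le_ne_top hfin (measure_mono (Ici_subset_Ioi.mpr hrr'))))
  intro t ht
  refine image_lt_of_deriv_lt_deriv_boundary_Ici (hu₁.hasDerivWithinAt hΦ₁)
    (hu₂.hasDerivWithinAt hΦ₂) (by rw [hu₁.apply_zero, hu₂.apply_zero]) ?_ ht
  intro s hs heq
  rw [heq]
  exact sub_PhiIci_lt_sub_PhiIoi α β hint hr hrr' hππ (hu₁.1 s hs)

/-- Key strict inequality for Theorem 3.11: if `π((r,r')) > 0` then for every
`t > 0`, `u^{Φ^{(r,∞)}}_t(π((r,∞))) > u^{Φ^{[r',∞)}}_t(π([r',∞)))`. -/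
theorem mass_ode_strict_inequality_local
    (α β : ℝ) (hβ : 0 ≤ β) (π : Measure ℝ)
    (hsupp : π (Set.Iic 0) = 0) (hσ : SigmaFinite π)
    (hint : Integrable (fun θ => min θ (θ ^ 2)) π)
    (r r' : ℝ) (hr : 0 < r) (hrr' : r < r')
    (hππ : 0 < π (Set.Ioo r r'))
    (u₁ u₂ : ℝ → ℝ)
    (hu₁ : IsMassSolution (PhiIoi α β π r) ((π (Set.Ioi r)).toReal) u₁)
    (hu₂ : IsMassSolution (PhiIci α β π r') ((π (Set.Ici r')).toReal) u₂) :
    ∀ t : ℝ, 0 < t → u₂ t < u₁ t :=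
  mass_ode_strict_inequality_local_general α β π hsupp hint r r' hr hrr' hππ u₁ u₂ hu₁ hu₂
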